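/- Let α > 0, β > 0 and let (y(t), P(t)), t ∈ (π, t̂), be the parametrization of the right Poincaré half-return map as above. Then lim_{t → π⁺} P'(t)/y'(t) = −e^{απ}; equivalently, the derivative dP_R/dy of the half-return map tends to −e^{απ} as y → +∞. -/

import Mathlib

/-!
Differentiating the quotients gives `P' = c e^{αt} A(t) / sin² t` and
`y' = -c e^{-αt} B(t) / sin² t` with `c = β / (1 + α²)` and continuous numerators
`A = PParDerivNum α`, `B = yParDerivNum α`, so the singular factors `sin² t` cancel:
`P'/y' = -e^{2αt} A(t) / B(t)`. Since `A(π) = 1 + e^{-απ}` and `B(π) = 1 + e^{απ}`, the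
limit at `π` is `-e^{2απ} e^{-απ} = -e^{απ}`.
-/

open Real

noncomputable def psiPlus (α t : ℝ) : ℝ :=
  1 - Real.exp (α * t) * (Real.cos t - α * Real.sin t)

noncomputable def psiMinus (α t : ℝ) : ℝ :=
  1 - Real.exp (-(α * t)) * (Real.cos t + α * Real.sin t)

noncomputable def yPar (α β t : ℝ) : ℝ :=
  -(β / (1 + α ^ 2)) * Real.exp (-(α * t)) * psiPlus α t / Real.sin t

noncomputable def PPar (α β t : ℝ) : ℝ :=
  (β / (1 + α ^ 2)) * Real.exp (α * t) * psiMinus α t / Real.sin t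

open Filter Topology Set

noncomputable def PParDerivNum (α t : ℝ) : ℝ :=
  α * psiMinus α t * sin t + (1 + α ^ 2) * exp (-(α * t)) * sin t ^ 2 - psiMinus α t * cos t

noncomputable def yParDerivNum (α t : ℝ) : ℝ :=
  -(α * psiPlus α t * sin t) + (1 + α ^ 2) * exp (α * t) * sin t ^ 2 - psiPlus α t * cos t

lemma hasDerivAt_psiPlus (α t : ℝ) :
    HasDerivAt (psiPlus α) (exp (α * t) * (1 + α ^ 2) * sin t) t := by
  have hlin : HasDerivAt (fun t : ℝ => α * t) α t := by
    simpa using (hasDerivAt_id t).const_mul α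
  have htrig : HasDerivAt (fun t => cos t - α * sin t) (-sin t - α * cos t) t :=
    (hasDerivAt_cos t).sub ((hasDerivAt_sin t).const_mul α)
  exact ((hlin.exp.mul htrig).const_sub 1).congr_deriv (by ring)

lemma hasDerivAt_psiMinus (α t : ℝ) :
    HasDerivAt (psiMinus α) (exp (-(α * t)) * (1 + α ^ 2) * sin t) t := by
  have hlin : HasDerivAt (fun t : ℝ => -(α * t)) (-α) t :=
    ((hasDerivAt_id t).const_mul α).neg.congr_deriv (by ring)
  have htrig : HasDerivAt (fun t => cos t + α * sin t) (-sin t + α * cos t) t :=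
    (hasDerivAt_cos t).add ((hasDerivAt_sin t).const_mul α)
  exact ((hlin.exp.mul htrig).const_sub 1).congr_deriv (by ring)

lemma deriv_PPar (α β t : ℝ) (hs : sin t ≠ 0) :
    deriv (PPar α β) t = β / (1 + α ^ 2) * exp (α * t) * PParDerivNum α t / sin t ^ 2 := by
  have hlin : HasDerivAt (fun t : ℝ => α * t) α t := by
    simpa using (hasDerivAt_id t).const_mul α
  have hnum := (hlin.exp.const_mul (β / (1 + α ^ 2))).mul (hasDerivAt_psiMinus α t)
  have hPPar : HasDerivAt (PPar α β) _ t := hnum.div (hasDerivAt_sin t) hs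
  rw [hPPar.deriv, Pi.mul_apply, div_eq_div_iff (by positivity) (by positivity), PParDerivNum]
  ring

lemma deriv_yPar (α β t : ℝ) (hs : sin t ≠ 0) :
    deriv (yPar α β) t
      = -(β / (1 + α ^ 2) * exp (-(α * t)) * yParDerivNum α t) / sin t ^ 2 := by
  have hlin : HasDerivAt (fun t : ℝ => -(α * t)) (-α) t :=
    ((hasDerivAt_id t).const_mul α).neg.congr_deriv (by ring)
  have hnum := (hlin.exp.const_mul (-(β / (1 + α ^ 2)))).mul (hasDerivAt_psiPlus α t)
  have hyPar : HasDerivAt (yPar α β) _ t := hnum.div (hasDerivAt_sin t) hs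
  rw [hyPar.deriv, Pi.mul_apply, div_eq_div_iff (by positivity) (by positivity), yParDerivNum]
  ring

lemma deriv_PPar_div_deriv_yPar (α : ℝ) {β t : ℝ} (hβ : β ≠ 0) (hs : sin t ≠ 0) :
    deriv (PPar α β) t / deriv (yPar α β) t
      = -(exp (α * t) ^ 2 * PParDerivNum α t / yParDerivNum α t) := by
  have hc : β / (1 + α ^ 2) ≠ 0 := div_ne_zero hβ (by positivity)
  rw [deriv_PPar α β t hs, deriv_yPar α β t hs, exp_neg]
  have hs2 : sin t ^ 2 ≠ 0 := pow_ne_zero 2 hs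
  have he : exp (α * t) ≠ 0 := (exp_pos _).ne'
  rcases eq_or_ne (yParDerivNum α t) 0 with hB | hB
  · simp [hB]
  · field_simp

lemma continuous_PParDerivNum (α : ℝ) : Continuous (PParDerivNum α) := by
  unfold PParDerivNum psiMinus; fun_prop

lemma continuous_yParDerivNum (α : ℝ) : Continuous (yParDerivNum α) := by
  unfold yParDerivNum psiPlus; fun_prop

lemma PParDerivNum_pi (α : ℝ) : PParDerivNum α π = 1 + exp (-(α * π)) := by
  simp [PParDerivNum, psiMinus]

lemma yParDerivNum_pi (α : ℝ) : yParDerivNum α π = 1 + exp (α * π) := by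
  simp [yParDerivNum, psiPlus]

lemma eventually_sin_ne_zero_nhdsGT_pi : ∀ᶠ t in 𝓝[>] π, sin t ≠ 0 := by
  filter_upwards [Ioo_mem_nhdsGT (show π < π + π by linarith [pi_pos])] with t ht
  have : 0 < sin (t - π) := sin_pos_of_pos_of_lt_pi (by linarith [ht.1]) (by linarith [ht.2])
  rw [sin_sub_pi] at this
  linarith

theorem stmt_10_general (α β : ℝ) (hβ : 0 < β) :
    Filter.Tendsto (fun t => deriv (PPar α β) t / deriv (yPar α β) t)
      (nhdsWithin π (Set.Ioi π)) (nhds (-Real.exp (α * π))) := by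
  have hB : yParDerivNum α π ≠ 0 := by rw [yParDerivNum_pi]; positivity
  have hval : -(exp (α * π) ^ 2 * PParDerivNum α π / yParDerivNum α π) = -exp (α * π) := by
    rw [PParDerivNum_pi, yParDerivNum_pi, exp_neg]
    field_simp
    ring
  have hcont :
      ContinuousAt (fun t => -(exp (α * t) ^ 2 * PParDerivNum α t / yParDerivNum α t)) π :=
    (((by fun_prop : Continuous fun t => exp (α * t) ^ 2).mul
      (continuous_PParDerivNum α)).continuousAt.div
        (continuous_yParDerivNum α).continuousAt hB).neg
  refine Tendsto.congr' ?_ (hval ▸ hcont.continuousWithinAt.tendsto)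
  filter_upwards [eventually_sin_ne_zero_nhdsGT_pi] with t hs
  exact (deriv_PPar_div_deriv_yPar α hβ.ne' hs).symm

/-- As `t → π⁺` (i.e. as the starting height `y → +∞`), the derivative of the right
half-return map, `P'(t)/y'(t)`, tends to `-e^{απ}`. -/
theorem stmt_10 (α β : ℝ) (hα : 0 < α) (hβ : 0 < β) :
    Filter.Tendsto (fun t => deriv (PPar α β) t / deriv (yPar α β) t)
      (nhdsWithin π (Set.Ioi π)) (nhds (-Real.exp (α * π))) :=
  stmt_10_general α β hβ
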